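/- arXiv:1001.4072 — 6 statements merged into one kernel-verified Lean document; each statement's English description precedes it below -/
import Mathlib

section
/- The set S of s-terminal Hamming sources of length n has cardinality (s·n + 1)·2^n when s > 2, and (n + 1)·2^n when s = 2. -/
/-- Hamming weight of a binary vector. -/
def wt {n : ℕ} (v : Fin n → ZMod 2) : ℕ := (Finset.univ.filter fun j => v j ≠ 0).card

/-- The set of `s`-terminal Hamming sources of length `n`: tuples `(b+v₁,…,b+v_s)`
with `b ∈ F₂ⁿ` and total Hamming weight of the `vᵢ` at most 1. -/
def hammingS (s n : ℕ) : Set (Fin s → Fin n → ZMod 2) :=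
  {x | ∃ (b : Fin n → ZMod 2) (v : Fin s → Fin n → ZMod 2),
    (∀ i, x i = b + v i) ∧ (∑ i, wt (v i)) ≤ 1}

/-! A source is a base vector `b` plus a displacement of total weight at most one, i.e. `0` or
one of the `s·n` unit vectors of `F₂^(s×n)`; this gives `2^n · (s·n + 1)` parameters. For
`s > 2` they are distinct: two parametrisations of one source differ by a constant tuple
`(c,…,c)` of total weight `s·|c| ≤ 2`, forcing `c = 0`. For `s = 2` the base is ambiguous, as
`(b, b + e) = (b' + e, b')` with `b' = b + e`; instead a source is determined by `x₀` and
`x₁ - x₀`, which ranges over the `n + 1` vectors of weight at most one. -/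

theorem wt_eq_hammingNorm {n : ℕ} (v : Fin n → ZMod 2) : wt v = hammingNorm v := rfl

theorem hammingNorm_sub_le {ι : Type*} [Fintype ι] {β : ι → Type*} [∀ i, AddGroup (β i)]
    [∀ i, DecidableEq (β i)] (x y : ∀ i, β i) :
    hammingNorm (x - y) ≤ hammingNorm x + hammingNorm y := by
  classical
  refine (Finset.card_le_card fun i hi => ?_).trans (Finset.card_union_le _ _)
  simp only [Finset.mem_filter, Finset.mem_union, Finset.mem_univ, true_and, Pi.sub_apply] at hi ⊢
  by_contra! h
  simp [h.1, h.2] at hi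

theorem hammingDist_le_of_add_eq {ι : Type*} [Fintype ι] {β : ι → Type*}
    [∀ i, AddCommGroup (β i)] [∀ i, DecidableEq (β i)] {b b' v v' : ∀ i, β i}
    (h : b + v = b' + v') : hammingDist b b' ≤ hammingNorm v + hammingNorm v' := by
  rw [hammingDist_eq_hammingNorm, neg_add_eq_sub,
    sub_eq_sub_iff_add_eq_add.mpr (by rw [← h, add_comm])]
  exact hammingNorm_sub_le v v'

theorem hammingNorm_uncurry {ι κ β : Type*} [Fintype ι] [Fintype κ] [Zero β] [DecidableEq β]
    (x : ι → κ → β) : hammingNorm (Function.uncurry x) = ∑ i, hammingNorm (x i) := by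
  simp only [hammingNorm, Finset.card_filter, Fintype.sum_prod_type, Function.uncurry_apply_pair]
  rfl

theorem hammingNorm_le_one_iff {ι : Type*} [Fintype ι] [DecidableEq ι] {v : ι → ZMod 2} :
    hammingNorm v ≤ 1 ↔ v = 0 ∨ ∃ j, v = Pi.single j 1 := by
  constructor
  · intro h
    rcases eq_or_ne v 0 with rfl | hv
    · exact .inl rfl
    obtain ⟨j, hj⟩ := Function.ne_iff.mp hv
    refine .inr ⟨j, funext fun k => ?_⟩
    rcases eq_or_ne k j with rfl | hkj
    · rw [Pi.single_eq_same]
      exact Fin.eq_one_of_ne_zero _ hj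
    · rw [Pi.single_eq_of_ne hkj]
      by_contra hk
      exact hkj (Finset.card_le_one.mp h k (by simpa using hk) j (by simpa using hj))
  · rintro (rfl | ⟨j, rfl⟩)
    · simp
    · refine Finset.card_le_one.mpr fun a ha b hb => ?_
      simp only [Finset.mem_filter, Finset.mem_univ, true_and, ne_eq, Pi.single_apply,
        ite_eq_right_iff, Classical.not_imp] at ha hb
      rw [ha.1, hb.1]

theorem ncard_setOf_hammingNorm_le_one (ι : Type*) [Fintype ι] [DecidableEq ι] :
    {v : ι → ZMod 2 | hammingNorm v ≤ 1}.ncard = Fintype.card ι + 1 := by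
  have hball : {v : ι → ZMod 2 | hammingNorm v ≤ 1} =
      insert 0 (Set.range fun j => Pi.single j 1) := by
    ext v
    simp [hammingNorm_le_one_iff, eq_comm]
  rw [hball, Set.ncard_insert_of_notMem, Set.ncard_range_of_injective, Nat.card_eq_fintype_card]
  · intro j j' h
    by_contra hne
    simpa [Pi.single_apply, hne] using congr_fun h j
  · rintro ⟨j, hj⟩
    simpa using congr_fun hj j

theorem ncard_setOf_sum_wt_le_one (s n : ℕ) :
    {v : Fin s → Fin n → ZMod 2 | ∑ i, wt (v i) ≤ 1}.ncard = s * n + 1 := by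
  have hcurry : {v : Fin s → Fin n → ZMod 2 | ∑ i, wt (v i) ≤ 1} =
      Equiv.curry _ _ _ '' {w | hammingNorm w ≤ 1} := by
    rw [Equiv.image_eq_preimage_symm]
    ext v
    simp [hammingNorm_uncurry, wt_eq_hammingNorm]
  rw [hcurry, Set.ncard_image_of_injective _ (Equiv.injective _), ncard_setOf_hammingNorm_le_one]
  simp

theorem hammingS_eq_image (s n : ℕ) :
    hammingS s n =
      (fun p : (Fin n → ZMod 2) × (Fin s → Fin n → ZMod 2) => fun i => p.1 + p.2 i) ''
        (Set.univ ×ˢ {v | ∑ i, wt (v i) ≤ 1}) := by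
  ext x
  simp [hammingS, funext_iff, eq_comm, and_comm]

theorem hammingS_param_injOn {s n : ℕ} (hs : 2 < s) :
    Set.InjOn (fun p : (Fin n → ZMod 2) × (Fin s → Fin n → ZMod 2) => fun i => p.1 + p.2 i)
      (Set.univ ×ˢ {v | ∑ i, wt (v i) ≤ 1}) := by
  rintro ⟨b, v⟩ ⟨-, hv⟩ ⟨b', v'⟩ ⟨-, hv'⟩ h
  simp only [Set.mem_ofPred_eq] at hv hv' h
  have hb : b = b' := by
    have hdist : s * hammingDist b b' ≤ 2 * 1 := calc
      s * hammingDist b b' = ∑ _ : Fin s, hammingDist b b' := by simp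
      _ ≤ ∑ i, (wt (v i) + wt (v' i)) :=
        Finset.sum_le_sum fun i _ => hammingDist_le_of_add_eq (congr_fun h i)
      _ ≤ 2 * 1 := by rw [Finset.sum_add_distrib]; omega
    exact hammingDist_lt_one.mp (Nat.lt_of_mul_lt_mul_left (hdist.trans_lt (by omega)))
  subst hb
  exact Prod.ext rfl (funext fun i => add_left_cancel (congr_fun h i))

theorem hammingS_two_eq_image (n : ℕ) :
    hammingS 2 n = (fun p : (Fin n → ZMod 2) × (Fin n → ZMod 2) => ![p.1, p.1 + p.2]) ''
      (Set.univ ×ˢ {u | wt u ≤ 1}) := by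
  ext x
  constructor
  · rintro ⟨b, v, hx, hv⟩
    refine ⟨(x 0, v 1 - v 0), ⟨trivial, ?_⟩, ?_⟩
    · rw [Fin.sum_univ_two] at hv
      exact (hammingNorm_sub_le (v 1) (v 0)).trans
        (by simpa only [wt_eq_hammingNorm, add_comm] using hv)
    · ext i : 1
      fin_cases i <;> simp [hx]
  · rintro ⟨⟨a, u⟩, ⟨-, hu⟩, rfl⟩
    refine ⟨a, ![0, u], ?_, ?_⟩
    · simp [Fin.forall_fin_two]
    · simpa [Fin.sum_univ_two, wt_eq_hammingNorm] using hu

theorem hammingS_two_param_injective (n : ℕ) :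
    Function.Injective fun p : (Fin n → ZMod 2) × (Fin n → ZMod 2) => ![p.1, p.1 + p.2] := by
  rintro ⟨a, u⟩ ⟨a', u'⟩ h
  have h0 : a = a' := congr_fun h 0
  subst h0
  exact Prod.ext rfl (add_left_cancel (congr_fun h 1))

/-- The set of `s`-terminal Hamming sources of length `n` has cardinality
`(s·n + 1)·2^n` when `s > 2`, and `(n + 1)·2^n` when `s = 2`. -/
theorem stmt_6 (s n : ℕ) :
    (2 < s → Nat.card (hammingS s n) = (s * n + 1) * 2 ^ n) ∧
    (s = 2 → Nat.card (hammingS s n) = (n + 1) * 2 ^ n) := by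
  refine ⟨fun hs => ?_, ?_⟩
  · rw [Nat.card_coe_set_eq, hammingS_eq_image, (hammingS_param_injOn hs).ncard_image,
      Set.ncard_prod, Set.ncard_univ, ncard_setOf_sum_wt_le_one]
    simp [mul_comm]
  · rintro rfl
    rw [Nat.card_coe_set_eq, hammingS_two_eq_image,
      Set.ncard_image_of_injective _ (hammingS_two_param_injective n), Set.ncard_prod,
      Set.ncard_univ]
    simp [wt_eq_hammingNorm, ncard_setOf_hammingNorm_le_one, mul_comm]
end

section
/- (Null space shifting) Let H₁,…,H_s be F₂-matrices with n columns that compress the set S of s-terminal Hamming sources of length n, and suppose null(H_i) = K ⊕ N_i for all i ≠ r while null(H_r) = N_r, where K, N₁,…,N_s are subspaces of F₂ⁿ. Then any matrices H′₁,…,H′_s with null(H′_i) = K ⊕ N_i for all i ≠ d and null(H′_d) = N_d (for any index d) also compress S. -/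
/-- (Null space shifting) If `H₁,…,H_s` compress the `s`-terminal Hamming sources of
length `n`, with `null(H_i) = K ⊕ N_i` for all `i ≠ r` and `null(H_r) = N_r`, then any
matrices `H′₁,…,H′_s` with `null(H′_i) = K ⊕ N_i` for all `i ≠ d` and `null(H′_d) = N_d`
also compress the `s`-terminal Hamming sources of length `n`. -/
theorem stmt_8 (s n : ℕ) (m m' : Fin s → ℕ)
    (H : ∀ i : Fin s, Matrix (Fin (m i)) (Fin n) (ZMod 2))
    (H' : ∀ i : Fin s, Matrix (Fin (m' i)) (Fin n) (ZMod 2))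
    (K : Submodule (ZMod 2) (Fin n → ZMod 2))
    (N : Fin s → Submodule (ZMod 2) (Fin n → ZMod 2))
    (r d : Fin s)
    (hKN : ∀ i, K ⊓ N i = ⊥)
    (hH : ∀ i, i ≠ r → LinearMap.ker (H i).mulVecLin = K ⊔ N i)
    (hHr : LinearMap.ker (H r).mulVecLin = N r)
    (hH' : ∀ i, i ≠ d → LinearMap.ker (H' i).mulVecLin = K ⊔ N i)
    (hHd : LinearMap.ker (H' d).mulVecLin = N d)
    (hinj : Set.InjOn (fun x (i : Fin s) => (H i).mulVec (x i)) (hammingS s n)) :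
    Set.InjOn (fun x (i : Fin s) => (H' i).mulVec (x i)) (hammingS s n) := by
  intro x hx y hy hxy
  have hker : ∀ i, x i - y i ∈ LinearMap.ker (H' i).mulVecLin := by
    intro i
    rw [LinearMap.mem_ker, Matrix.mulVecLin_apply, Matrix.mulVec_sub]
    have := congrFun hxy i
    simp only at this
    rw [this, sub_self]
  obtain ⟨k, hkK, hrk⟩ : ∃ k ∈ K, x r - y r - k ∈ N r := by
    by_cases hrd : r = d
    · exact ⟨0, K.zero_mem, by simpa [hrd] using (hHd ▸ hker d)⟩
    · have h := hker r
      rw [hH' r hrd, Submodule.mem_sup] at h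
      obtain ⟨k, hk, nn, hn, heq⟩ := h
      exact ⟨k, hk, by rw [← heq]; simpa using hn⟩
  set x' : Fin s → Fin n → ZMod 2 := fun i => x i - k with hx'
  have hx'S : x' ∈ hammingS s n := by
    obtain ⟨b, v, hbv, hw⟩ := hx
    refine ⟨b - k, v, fun i => ?_, hw⟩
    rw [hx']; simp only [hbv i]; ring
  have hkerH : ∀ i, x' i - y i ∈ LinearMap.ker (H i).mulVecLin := by
    intro i
    have hd : x' i - y i = (x i - y i) - k := by rw [hx']; ring
    by_cases hir : i = r
    · subst hir; rw [hHr, hd]; exact hrk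
    · rw [hH i hir, hd]
      by_cases hid : i = d
      · subst hid
        exact Submodule.sub_mem _ (Submodule.mem_sup_right (hHd ▸ hker i))
          (Submodule.mem_sup_left hkK)
      · have h := hker i; rw [hH' i hid] at h
        exact Submodule.sub_mem _ h (Submodule.mem_sup_left hkK)
  have heq : x' = y := by
    apply hinj hx'S hy
    funext i
    have h := hkerH i
    rw [LinearMap.mem_ker, Matrix.mulVecLin_apply, Matrix.mulVec_sub, sub_eq_zero] at h
    exact h
  have hk0 : k = 0 := by
    have hdk : x d - y d = k := by
      have := congrFun heq d
      rw [hx'] at this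
      simp only at this
      rw [← this]; ring
    have hmem : k ∈ K ⊓ N d := ⟨hkK, hdk ▸ (hHd ▸ hker d)⟩
    simpa [hKN d] using hmem
  funext i
  have := congrFun heq i
  rw [hx'] at this
  simpa [hk0] using this
end

section
/- If H₁,…,H₃ are 3×5 matrices over F₂ whose syndrome map is injective on the 3-terminal Hamming sources of length 5, then null(H₁) contains no vector of Hamming weight 1 or 2, and hence every nonzero vector of null(H₁) has weight 3 or 4. -/
/-!
The sources `(u, 0, 0)` with `wt u ≤ 1` make `H₁` injective on vectors of weight at most one.
A kernel vector of weight one or two is a difference `u - w` of two such vectors with equal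
syndromes, so every nonzero vector of `null H₁` has weight at least 3. Since `null H₁` has
dimension at least `5 - 3 = 2`, a kernel vector of weight 5, i.e. the all-ones vector `1`, comes
with a kernel vector `y ∉ {0, 1}`; then `y` and `y + 1` are nonzero kernel vectors whose weights
add up to 5, so one of them has weight at most 2.
-/

open Matrix Finset

theorem Matrix.exists_mulVec_eq_zero_notMem_span_singleton {K m n : Type*} [Field K] [Fintype m]
    [Fintype n] (H : Matrix m n K) (hmn : Fintype.card m + 2 ≤ Fintype.card n) (x : n → K) :
    ∃ y, H *ᵥ y = 0 ∧ y ∉ K ∙ x := by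
  have hker : 2 ≤ Module.finrank K (LinearMap.ker H.mulVecLin) := by
    have := LinearMap.finrank_range_add_finrank_ker H.mulVecLin
    have := Submodule.finrank_le (LinearMap.range H.mulVecLin)
    simp only [Module.finrank_fintype_fun_eq_card] at *
    omega
  have hspan : Module.finrank K (K ∙ x) ≤ 1 := by
    simpa using finrank_span_le_card (R := K) ({x} : Set (n → K))
  obtain ⟨y, hy, hyx⟩ := SetLike.not_le_iff_exists.mp fun hle =>
    (Submodule.finrank_mono hle).not_gt (hspan.trans_lt hker)
  exact ⟨y, hy, hyx⟩

section hamming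

variable {ι : Type*} [Fintype ι] [DecidableEq ι] {β : ι → Type*} [∀ i, Zero (β i)]
  [∀ i, DecidableEq (β i)]

theorem hammingNorm_single_le_one (i : ι) (a : β i) : hammingNorm (Pi.single i a) ≤ 1 :=
  card_le_one.mpr fun j hj k hk => by
    simp only [mem_filter, mem_univ, true_and] at hj hk
    have eq_of_ne_zero (l : ι) (hl : Pi.single i a l ≠ 0) : l = i :=
      by_contra fun h => hl (Pi.single_eq_of_ne h a)
    rw [eq_of_ne_zero j hj, eq_of_ne_zero k hk]

theorem hammingDist_single_self_lt {x : ∀ i, β i} {i : ι} (hi : x i ≠ 0) :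
    hammingDist x (Pi.single i (x i)) < hammingNorm x := by
  refine card_lt_card ⟨fun j hj => ?_, fun hsub => ?_⟩
  · simp only [mem_filter, mem_univ, true_and] at hj ⊢
    rcases eq_or_ne j i with rfl | hji
    · exact hi
    · simpa [hji] using hj
  · have := hsub (by simpa using hi)
    simp at this

end hamming

theorem Matrix.three_le_hammingNorm_of_injOn {R m ι : Type*} [Fintype ι] [DecidableEq ι] [Ring R]
    [DecidableEq R] [Fintype m] (H : Matrix m ι R) (hH : Set.InjOn H.mulVec {u | hammingNorm u ≤ 1})
    {x : ι → R} (hx : H *ᵥ x = 0) (hx0 : x ≠ 0) : 3 ≤ hammingNorm x := by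
  by_contra! hlt
  obtain ⟨i, hi⟩ : ∃ i, x i ≠ 0 := Function.ne_iff.mp hx0
  have hux : hammingNorm (Pi.single i (x i) - x) ≤ 1 := by
    rw [← neg_add_eq_sub, ← hammingDist_eq_hammingNorm]
    have hdist := hammingDist_single_self_lt hi
    omega
  have hsingle := hH (hammingNorm_single_le_one i (x i)) hux (by simp [mulVec_sub, hx])
  exact hx0 (sub_eq_self.mp hsingle.symm)

namespace ZMod

variable {ι : Type*} [Fintype ι]

theorem eq_one_of_hammingNorm_eq_card {x : ι → ZMod 2} (hx : hammingNorm x = Fintype.card ι) :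
    x = 1 := by
  have hsupp := filter_eq_self.mp ((card_eq_iff_eq_univ _).mp hx)
  funext j
  exact Fin.eq_one_of_ne_zero _ (hsupp j (mem_univ j))

theorem hammingNorm_add_hammingNorm_add_one (x : ι → ZMod 2) :
    hammingNorm x + hammingNorm (x + 1) = Fintype.card ι := by
  have key : ∀ a : ZMod 2, a + 1 ≠ 0 ↔ ¬ a ≠ 0 := by decide
  simp only [hammingNorm, Pi.add_apply, Pi.one_apply, key]
  exact card_filter_add_card_filter_not _

end ZMod

theorem mem_hammingS_single {s n : ℕ} (i : Fin s) {u : Fin n → ZMod 2} (hu : wt u ≤ 1) :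
    Pi.single i u ∈ hammingS s n :=
  ⟨0, Pi.single i u, fun _ => (zero_add _).symm, by
    rwa [Fintype.sum_eq_single i fun j hj => by simp [hj, wt], Pi.single_eq_same]⟩

theorem Matrix.hammingNorm_ne_card_of_mulVec_eq_zero {m ι : Type*} [Fintype m] [Fintype ι]
    (H : Matrix m ι (ZMod 2)) (hmn : Fintype.card m + 2 ≤ Fintype.card ι)
    (hι : Fintype.card ι < 6) (hH : ∀ x, H *ᵥ x = 0 → x ≠ 0 → 3 ≤ hammingNorm x) {x : ι → ZMod 2}
    (hx : H *ᵥ x = 0) : hammingNorm x ≠ Fintype.card ι := by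
  intro hxcard
  obtain rfl := ZMod.eq_one_of_hammingNorm_eq_card hxcard
  obtain ⟨y, hy, hy1⟩ := H.exists_mulVec_eq_zero_notMem_span_singleton hmn 1
  have hy0 : y ≠ 0 := fun h => hy1 (h ▸ Submodule.zero_mem _)
  have hy10 : y + 1 ≠ 0 := fun h => hy1 <| eq_neg_of_add_eq_zero_left h ▸
    Submodule.neg_mem _ (Submodule.mem_span_singleton_self 1)
  have hy_wt := hH y hy hy0
  have hy1_wt := hH (y + 1) (by rw [mulVec_add, hy, hx, add_zero]) hy10
  have hsum := ZMod.hammingNorm_add_hammingNorm_add_one y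
  omega

/-- If `H₁, H₂, H₃` are `3×5` matrices over `F₂` whose syndrome map is injective on the
3-terminal Hamming sources of length 5, then `null(H₁)` contains no vector of Hamming
weight 1 or 2, and hence every nonzero vector of `null(H₁)` has weight 3 or 4. -/
theorem stmt_12
    (H₁ H₂ H₃ : Matrix (Fin 3) (Fin 5) (ZMod 2))
    (hinj : Set.InjOn
      (fun x : Fin 3 → Fin 5 → ZMod 2 => (H₁.mulVec (x 0), H₂.mulVec (x 1), H₃.mulVec (x 2)))
      (hammingS 3 5)) :
    (∀ x : Fin 5 → ZMod 2, H₁.mulVec x = 0 → wt x ≠ 1 ∧ wt x ≠ 2) ∧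
    (∀ x : Fin 5 → ZMod 2, H₁.mulVec x = 0 → x ≠ 0 → wt x = 3 ∨ wt x = 4) := by
  have hinj₁ : Set.InjOn H₁.mulVec {u | wt u ≤ 1} := fun u hu w hw h => by
    have hsrc := hinj (mem_hammingS_single 0 hu) (mem_hammingS_single 0 hw) (by simp [h])
    simpa using congrFun hsrc 0
  -- `wt` is definitionally Mathlib's `hammingNorm` on `Fin 5 → ZMod 2`.
  have hmin (x) (hx : H₁ *ᵥ x = 0) (hx0 : x ≠ 0) : 3 ≤ wt x :=
    H₁.three_le_hammingNorm_of_injOn hinj₁ hx hx0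
  refine ⟨fun x hx => ?_, fun x hx hx0 => ?_⟩
  · rcases eq_or_ne x 0 with rfl | hx0
    · simp [wt]
    · have h3 := hmin x hx hx0
      omega
  · have h3 := hmin x hx hx0
    have h5 : wt x ≠ 5 := H₁.hammingNorm_ne_card_of_mulVec_eq_zero (by simp) (by simp) hmin hx
    have hle : wt x ≤ 5 := hammingNorm_le_card_fintype.trans_eq (Fintype.card_fin 5)
    omega
end

section
/- (HCMS decodability) Let s > 2, n, M satisfy 2^M = (sn+1)2^n. Let P = [Q₁ Q₂ … Q_s] be an (M−n) × sn matrix over F₂ whose columns are exactly all 2^(M−n) − 1 = sn distinct nonzero vectors of F₂^(M−n), partitioned into (M−n)×n blocks with Q₁ + … + Q_s = 0. Suppose the n×n matrix R formed by stacking Q₁,…,Q_{s−1} on top of some matrix T is invertible, and let G₁,…,G_s be a row partition of T. Then the coding matrices [G_i; Q_i] (vertical concatenation), i = 1,…,s, form a syndrome map that is injective on the set of s-terminal Hamming sources of length n. -/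
/-!
Since `∑ Qᵢ = 0`, adding up the `Q`-parts of the syndromes of `(b + v₁, …, b + v_s)` cancels `b`
and leaves `P (v₁; …; v_s)`. The error pattern has weight at most one, so this is either `0` or a
single column of `P`; as those columns are distinct and nonzero, it determines `(v₁, …, v_s)`.
Removing the now known `vᵢ` from the syndromes gives `Qᵢ b` for `i < s` and every row of `T b`,
which determine `b` because `R` is invertible.
-/

open Matrix

lemma wt_eq_zero_iff {n : ℕ} {v : Fin n → ZMod 2} : wt v = 0 ↔ v = 0 :=
  hammingNorm_eq_zero

lemma eq_zero_or_eq_single_of_wt_le_one {n : ℕ} {v : Fin n → ZMod 2} (hv : wt v ≤ 1) :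
    v = 0 ∨ ∃ j, v = Pi.single j 1 := by
  by_cases hzero : v = 0
  · exact Or.inl hzero
  obtain ⟨j, hj⟩ := Function.ne_iff.mp hzero
  have hsupp : ∀ j', v j' ≠ 0 → j' = j := fun j' hj' =>
    Finset.card_le_one.mp hv j' (by simpa using hj') j (by simpa using hj)
  refine Or.inr ⟨j, funext fun j' => ?_⟩
  rcases eq_or_ne j' j with rfl | hne
  · rw [Pi.single_eq_same]
    exact Fin.eq_one_of_ne_zero (v j') hj
  · rw [Pi.single_eq_of_ne hne]
    exact not_not.mp (mt (hsupp j') hne)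

lemma eq_zero_or_eq_single_single_of_sum_wt_le_one {s n : ℕ} {v : Fin s → Fin n → ZMod 2}
    (hv : ∑ i, wt (v i) ≤ 1) : v = 0 ∨ ∃ i j, v = Pi.single i (Pi.single j 1) := by
  by_cases hzero : v = 0
  · exact Or.inl hzero
  obtain ⟨i, hi⟩ := Function.ne_iff.mp hzero
  have hwt_pos : 0 < wt (v i) := Nat.pos_of_ne_zero (mt wt_eq_zero_iff.mp hi)
  rw [← Finset.add_sum_erase _ _ (Finset.mem_univ i)] at hv
  have hrest : ∀ i' ≠ i, v i' = 0 := fun i' hi' => by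
    have hrest_wt : ∑ i' ∈ Finset.univ.erase i, wt (v i') = 0 := by omega
    exact wt_eq_zero_iff.mp <| Finset.sum_eq_zero_iff.mp hrest_wt i' (by simp [hi'])
  obtain ⟨j, hj⟩ := (eq_zero_or_eq_single_of_wt_le_one (by omega : wt (v i) ≤ 1)).resolve_left hi
  refine Or.inr ⟨i, j, funext fun i' => ?_⟩
  rcases eq_or_ne i' i with rfl | hne
  · simp [hj]
  · simp [hne, hrest i' hne]

lemma sum_mulVec_add_left {ι m n R : Type*} [Fintype ι] [Fintype n] [NonUnitalNonAssocSemiring R]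
    {Q : ι → Matrix m n R} (hsum : ∑ i, Q i = 0) (b : n → R) (v : ι → n → R) :
    ∑ i, Q i *ᵥ (b + v i) = ∑ i, Q i *ᵥ v i := by
  simp only [mulVec_add, Finset.sum_add_distrib, ← sum_mulVec, hsum, zero_mulVec, zero_add]

lemma sum_mulVec_single_single {ι m n R : Type*} [Fintype ι] [DecidableEq ι] [Fintype n]
    [DecidableEq n] [NonAssocSemiring R] (Q : ι → Matrix m n R) (i : ι) (j : n) :
    ∑ i', Q i' *ᵥ (Pi.single i (Pi.single j 1) : ι → n → R) i' = (Q i).col j := by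
  rw [Finset.sum_eq_single i (fun i' _ hi' => by simp [hi']) (by simp), Pi.single_eq_same,
    mulVec_single_one]

lemma sum_mulVec_injOn_sum_wt_le_one {s k n : ℕ} {Q : Fin s → Matrix (Fin k) (Fin n) (ZMod 2)}
    (hcols_ne : ∀ i j, (fun r => Q i r j) ≠ 0)
    (hcols_inj : Function.Injective fun p : Fin s × Fin n => fun r => Q p.1 r p.2) :
    Set.InjOn (fun v : Fin s → Fin n → ZMod 2 => ∑ i, Q i *ᵥ v i) {v | ∑ i, wt (v i) ≤ 1} := by
  intro v hv w hw hvw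
  rcases eq_zero_or_eq_single_single_of_sum_wt_le_one hv with rfl | ⟨i, j, rfl⟩ <;>
    rcases eq_zero_or_eq_single_single_of_sum_wt_le_one hw with rfl | ⟨i', j', rfl⟩ <;>
    simp only [sum_mulVec_single_single, Pi.zero_apply, mulVec_zero, Finset.sum_const_zero] at hvw
  · rfl
  · exact absurd hvw.symm (hcols_ne i' j')
  · exact absurd hvw (hcols_ne i j)
  · obtain ⟨rfl, rfl⟩ := Prod.mk.inj (hcols_inj hvw)
    rfl

theorem stmt_13 (s n k t : ℕ)
    (Q : Fin s → Matrix (Fin k) (Fin n) (ZMod 2))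
    (hcols_ne : ∀ (i : Fin s) (j : Fin n), (fun r => Q i r j) ≠ 0)
    (hcols_inj : Function.Injective (fun p : Fin s × Fin n => fun r => Q p.1 r p.2))
    (hsum : ∑ i, Q i = 0)
    (T : Matrix (Fin t) (Fin n) (ZMod 2))
    (hR : Function.Injective (fun b : Fin n → ZMod 2 =>
      ((fun i : Fin (s - 1) => (Q (Fin.castLE (by omega) i)).mulVec b), T.mulVec b)))
    (π : Fin t → Fin s) :
    Set.InjOn
      (fun x : Fin s → Fin n → ZMod 2 => fun i : Fin s =>
        ((fun j : {j : Fin t // π j = i} => T.mulVec (x i) j.1), (Q i).mulVec (x i)))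
      (hammingS s n) := by
  rintro x ⟨b, v, hx, hv⟩ y ⟨c, w, hy, hw⟩ hxy
  obtain rfl : x = fun i => b + v i := funext hx
  obtain rfl : y = fun i => c + w i := funext hy
  have hQ (i : Fin s) : Q i *ᵥ (b + v i) = Q i *ᵥ (c + w i) :=
    congrArg Prod.snd (congrFun hxy i)
  have hT (j : Fin t) : (T *ᵥ (b + v (π j))) j = (T *ᵥ (c + w (π j))) j :=
    congrFun (congrArg Prod.fst (congrFun hxy (π j))) ⟨j, rfl⟩
  obtain rfl : v = w := sum_mulVec_injOn_sum_wt_le_one hcols_ne hcols_inj hv hw <| by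
    calc ∑ i, Q i *ᵥ v i = ∑ i, Q i *ᵥ (b + v i) := (sum_mulVec_add_left hsum b v).symm
      _ = ∑ i, Q i *ᵥ (c + w i) := Finset.sum_congr rfl fun i _ => hQ i
      _ = ∑ i, Q i *ᵥ w i := sum_mulVec_add_left hsum c w
  obtain rfl : b = c := hR <| Prod.ext (funext fun i => add_right_cancel (by
      simpa only [mulVec_add] using hQ _)) (funext fun j => add_right_cancel (by
      simpa only [mulVec_add, Pi.add_apply] using hT j))
  rfl
end

section
/- (Source doubling) If F₂-matrices H₁,…,H_s with n columns give a syndrome map injective on s-terminal Hamming sources of length n, then the pair (X, J) gives a syndrome map injective on 2-terminal Hamming sources of length sn, where X is the (s−1)n × sn block matrix with rows of blocks (I, I, 0, …), (0, I, I, 0, …), …, (0,…,0, I, I) and J is the block-diagonal matrix diag(H₁,…,H_s). -/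
/-- 2-terminal Hamming sources of length `sn` (vectors of `F₂^{sn}` written in `s`
blocks of length `n`): pairs `(z, z + w)` with `wt(w) ≤ 1`. -/
def hamming2S (s n : ℕ) :
    Set ((Fin s → Fin n → ZMod 2) × (Fin s → Fin n → ZMod 2)) :=
  {p | ∃ w : Fin s → Fin n → ZMod 2, p.2 = p.1 + w ∧ (∑ i, wt (w i)) ≤ 1}

/-- (Source doubling) If matrices `H₁,…,H_s` with `n` columns give a syndrome map
injective on `s`-terminal Hamming sources of length `n`, then the pair `(X, J)` gives a
syndrome map injective on 2-terminal Hamming sources of length `sn`, where `X` computes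
the consecutive block sums `z_i + z_{i+1}` and `J = diag(H₁,…,H_s)`. -/
theorem stmt_15 (s n : ℕ) (hs : 2 < s) (m : Fin s → ℕ)
    (H : ∀ i : Fin s, Matrix (Fin (m i)) (Fin n) (ZMod 2))
    (hinj : Set.InjOn (fun x (i : Fin s) => (H i).mulVec (x i)) (hammingS s n)) :
    Set.InjOn
      (fun p : (Fin s → Fin n → ZMod 2) × (Fin s → Fin n → ZMod 2) =>
        ((fun i : Fin (s - 1) =>
            p.1 ⟨i.1, by have := i.isLt; omega⟩ + p.1 ⟨i.1 + 1, by have := i.isLt; omega⟩),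
         (fun i : Fin s => (H i).mulVec (p.2 i))))
      (hamming2S s n) := by
  classical
  intro p hp q hq heq
  obtain ⟨w, hw, hwt⟩ := hp
  obtain ⟨w', hw', hwt'⟩ := hq
  simp only [Prod.mk.injEq] at heq
  obtain ⟨hX, hJ⟩ := heq
  have hs0 : 0 < s := by omega
  -- q.1 i = p.1 i + (p.1 0 + q.1 0) for all i
  have key : ∀ k (hk : k < s), q.1 ⟨k, hk⟩ = p.1 ⟨k, hk⟩ + (p.1 ⟨0, hs0⟩ + q.1 ⟨0, hs0⟩) := by
    intro k
    induction k with
    | zero =>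
      intro hk
      funext j
      simp only [Pi.add_apply]
      have : ∀ a b : ZMod 2, b = a + (a + b) := by decide
      exact this _ _
    | succ k ih =>
      intro hk
      have hk' : k < s := by omega
      have hks : k < s - 1 := by omega
      have h := congrFun hX ⟨k, hks⟩
      have ihk := ih hk'
      funext j
      have h1 := congrFun h j
      have h2 := congrFun ihk j
      simp only [Pi.add_apply] at h1 h2 ⊢
      have solve : ∀ a b c e d : ZMod 2, a + b = c + e → c = a + d → e = b + d := by decide
      exact solve _ _ _ _ _ h1 h2
  have key' : ∀ i : Fin s, q.1 i = p.1 i + (p.1 ⟨0, hs0⟩ + q.1 ⟨0, hs0⟩) := fun i => key i.1 i.isLt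
  set z0 : Fin n → ZMod 2 := p.1 ⟨0, hs0⟩ with hz0
  set z0' : Fin n → ZMod 2 := q.1 ⟨0, hs0⟩ with hz0'
  set x : Fin s → Fin n → ZMod 2 := fun i => p.2 i + (p.1 i + z0) with hxdef
  set y : Fin s → Fin n → ZMod 2 := fun i => q.2 i + (q.1 i + z0') with hydef
  have hxw : ∀ i, x i = z0 + w i := by
    intro i
    funext j
    have hpw := congrFun (congrFun hw i) j
    simp only [Pi.add_apply] at hpw
    simp only [hxdef, Pi.add_apply]
    have solve : ∀ p2 a b c : ZMod 2, p2 = a + b → p2 + (a + c) = c + b := by decide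
    exact solve _ _ _ _ hpw
  have hyw : ∀ i, y i = z0' + w' i := by
    intro i
    funext j
    have hpw := congrFun (congrFun hw' i) j
    simp only [Pi.add_apply] at hpw
    simp only [hydef, Pi.add_apply]
    have solve : ∀ p2 a b c : ZMod 2, p2 = a + b → p2 + (a + c) = c + b := by decide
    exact solve _ _ _ _ hpw
  have hx : x ∈ hammingS s n := ⟨z0, w, hxw, hwt⟩
  have hy : y ∈ hammingS s n := ⟨z0', w', hyw, hwt'⟩
  have hsnd : (fun i => (H i).mulVec (x i)) = (fun i => (H i).mulVec (y i)) := by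
    funext i
    have hq1 : q.1 i + z0' = p.1 i + z0 := by
      funext j
      have h1 := congrFun (key' i) j
      have h2 := congrFun (key' ⟨0, hs0⟩) j
      simp only [Pi.add_apply] at h1 h2 ⊢
      have solve : ∀ a b d u v : ZMod 2, u = a + d → v = b + d → u + v = a + b := by decide
      exact solve _ _ _ _ _ h1 h2
    have hJi : (H i).mulVec (p.2 i) = (H i).mulVec (q.2 i) := congrFun hJ i
    show (H i).mulVec (p.2 i + (p.1 i + z0)) = (H i).mulVec (q.2 i + (q.1 i + z0'))
    simp only [Matrix.mulVec_add, hq1, hJi]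
  have hxy : x = y := hinj hx hy hsnd
  -- find a block where both w and w' vanish
  set A := Finset.univ.filter (fun i => w i ≠ 0) with hA
  set B := Finset.univ.filter (fun i => w' i ≠ 0) with hB
  have hwt1 : ∀ (u : Fin s → Fin n → ZMod 2) (i : Fin s), u i ≠ 0 → 1 ≤ wt (u i) := by
    intro u i hne
    obtain ⟨j, hj⟩ := Function.ne_iff.mp hne
    exact Finset.card_pos.mpr ⟨j, Finset.mem_filter.mpr ⟨Finset.mem_univ _, by simpa using hj⟩⟩
  have hcardA : A.card ≤ 1 := by
    calc A.card = A.card • 1 := by simp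
    _ ≤ ∑ i ∈ A, wt (w i) := Finset.card_nsmul_le_sum A _ 1
        (fun i hi => hwt1 w i (Finset.mem_filter.mp hi).2)
    _ ≤ ∑ i, wt (w i) := Finset.sum_le_sum_of_subset (Finset.filter_subset _ _)
    _ ≤ 1 := hwt
  have hcardB : B.card ≤ 1 := by
    calc B.card = B.card • 1 := by simp
    _ ≤ ∑ i ∈ B, wt (w' i) := Finset.card_nsmul_le_sum B _ 1
        (fun i hi => hwt1 w' i (Finset.mem_filter.mp hi).2)
    _ ≤ ∑ i, wt (w' i) := Finset.sum_le_sum_of_subset (Finset.filter_subset _ _)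
    _ ≤ 1 := hwt'
  obtain ⟨i0, hi0⟩ : ∃ i0 : Fin s, i0 ∉ A ∪ B := by
    by_contra hcon
    push_neg at hcon
    have hsub : (Finset.univ : Finset (Fin s)) ⊆ A ∪ B := fun i _ => hcon i
    have h2 := Finset.card_le_card hsub
    have h3 := Finset.card_union_le A B
    simp only [Finset.card_univ, Fintype.card_fin] at h2
    omega
  rw [Finset.mem_union, not_or] at hi0
  have hwi0 : w i0 = 0 := by
    by_contra hne
    exact hi0.1 (Finset.mem_filter.mpr ⟨Finset.mem_univ _, hne⟩)
  have hwi0' : w' i0 = 0 := by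
    by_contra hne
    exact hi0.2 (Finset.mem_filter.mpr ⟨Finset.mem_univ _, hne⟩)
  have h00 : z0 = z0' := by
    have h := (hxw i0).symm.trans ((congrFun hxy i0).trans (hyw i0))
    rw [hwi0, hwi0', add_zero, add_zero] at h
    exact h
  have hfst : p.1 = q.1 := by
    funext i j
    have h1 := congrFun (key' i) j
    have h2 := congrFun h00 j
    simp only [Pi.add_apply] at h1 h2
    have solve : ∀ a b c c' : ZMod 2, b = a + (c + c') → c = c' → a = b := by decide
    exact solve _ _ _ _ h1 h2
  have hww : w = w' := by
    funext i j
    have h := congrFun ((hxw i).symm.trans ((congrFun hxy i).trans (hyw i))) j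
    have h2 := congrFun h00 j
    simp only [Pi.add_apply] at h
    have solve : ∀ c c' a b : ZMod 2, c + a = c' + b → c = c' → a = b := by decide
    exact solve _ _ _ _ h h2
  have hsndeq : p.2 = q.2 := by
    rw [hw, hw', hfst, hww]
  exact Prod.ext hfst hsndeq
end

section
/- (Inductive Hamming partition) Suppose the 2k-bit Hamming matrix P (size 2k × (2^(2k)−1)) admits a partition P = [A B C] into three 2k × n blocks (n = (2^(2k)−1)/3) with A + B + C = 0 and such that the stacked matrix [A; B] is full rank. Then the 2(k+1)-bit Hamming matrix admits a partition [A₊ B₊ C₊] into three 2(k+1) × n₊ blocks (n₊ = (2^(2(k+1))−1)/3 = 4n + 1) with A₊ + B₊ + C₊ = 0 and [A₊; B₊] full rank. -/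
/-!
Each column `x` of `P = [A B C]` spawns the four columns `(x; 0), (x; u), (x; v), (x; w)`,
where `u, v, w` are the nonzero vectors of `𝔽₂²`; with `(0; u), (0; v), (0; w)` these are all
nonzero vectors of `𝔽₂^(2k+2)`, and they can be dealt out to `A₊, B₊, C₊` so that corresponding
columns still sum to zero. For full rank of `[A₊; B₊]`, take `(r, α, r', β)` annihilating its
columns: on the four columns spawned from column `j` this is an invertible linear system over
`𝔽₂`, whose solution shows that `r ᵥ* A`, `r ᵥ* B`, `r' ᵥ* A`, `r' ᵥ* B` are constant vectors.
Full rank of `[A; B]` then forces `r = r' = 0`, and the tags force `α = β = 0`.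
-/

open Matrix Function

theorem Sum.elim_eq_elim_iff {α β γ : Type*} {f f' : α → γ} {g g' : β → γ} :
    Sum.elim f g = Sum.elim f' g' ↔ f = f' ∧ g = g' :=
  ⟨fun h => ⟨funext fun a => congrFun h (.inl a), funext fun b => congrFun h (.inr b)⟩,
    fun ⟨hf, hg⟩ => hf ▸ hg ▸ rfl⟩

theorem Sum.elim_eq_zero_iff {α β γ : Type*} [Zero γ] {f : α → γ} {g : β → γ} :
    Sum.elim f g = 0 ↔ f = 0 ∧ g = 0 := by
  rw [← Sum.elim_zero_zero, Sum.elim_eq_elim_iff]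

theorem Matrix.mulVec_surjective_iff_vecMul_eq_zero {m n K : Type*} [Field K] [Fintype m]
    [Fintype n] (M : Matrix m n K) : Surjective M.mulVec ↔ ∀ g, g ᵥ* M = 0 → g = 0 := by
  classical
  constructor
  · intro hM g hg
    ext i
    obtain ⟨x, hx⟩ := hM (Pi.single i 1)
    simpa [← hx, dotProduct_mulVec, hg] using (dotProduct_single_one g i).symm
  · intro hM
    have hrow : LinearIndependent K M.row := by
      rw [← vecMul_injective_iff, ← coe_vecMulLinear, injective_iff_map_eq_zero']
      exact fun g => ⟨hM g, fun h => h ▸ zero_vecMul M⟩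
    have : LinearMap.range M.mulVecLin = ⊤ := Submodule.eq_top_of_finrank_eq <| by
      rw [← rank, hrow.rank_matrix, Module.finrank_fintype_fun_eq_card]
    exact LinearMap.range_eq_top.mp this

theorem Matrix.prod_mulVec_surjective_iff {m n K : Type*} [Field K] [Fintype m]
    [Fintype n] (A B : Matrix m n K) :
    Surjective (fun x => (A *ᵥ x, B *ᵥ x)) ↔ ∀ u v, u ᵥ* A + v ᵥ* B = 0 → u = 0 ∧ v = 0 := by
  have : (fun x => (A *ᵥ x, B *ᵥ x)) =
      Equiv.sumArrowEquivProdArrow m m K ∘ (fromRows A B).mulVec := by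
    ext x <;> simp
  rw [this, EquivLike.comp_surjective, mulVec_surjective_iff_vecMul_eq_zero]
  constructor
  · intro h u v huv
    exact Sum.elim_eq_zero_iff.mp (h _ (by rwa [sumElim_vecMul_fromRows]))
  · intro h g hg
    rw [← Sum.elim_comp_inl_inr g, sumElim_vecMul_fromRows] at hg
    rw [← Sum.elim_comp_inl_inr g, Sum.elim_eq_zero_iff]
    exact h _ _ hg

/-- Over `𝔽₂`, one of `a`, `b`, `a + b` vanishes, and each case gives a vanishing combination
of the rows of `[A; B]`. -/
theorem eq_zero_of_vecMul_eq_const {m n : Type*} [Fintype m] [Fintype n]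
    {A B : Matrix m n (ZMod 2)} (hAB : Surjective fun x => (A *ᵥ x, B *ᵥ x))
    {r : m → ZMod 2} {a b : ZMod 2} (hA : r ᵥ* A = fun _ => a) (hB : r ᵥ* B = fun _ => b) :
    r = 0 := by
  have hrows := (prod_mulVec_surjective_iff A B).mp hAB
  have zmod_two : ∀ c : ZMod 2, c = 0 ∨ c = 1 := by decide
  rcases zmod_two a with rfl | rfl
  · exact (hrows r 0 (by rw [hA, zero_vecMul]; rfl)).1
  rcases zmod_two b with rfl | rfl
  · exact (hrows 0 r (by rw [hB, zero_vecMul]; rfl)).2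
  · exact (hrows r r (by rw [hA, hB]; rfl)).1

/-- Over `Fin (2 * k)` with `3 * card κ + 1 = 2 ^ (2 * k)`, the `3 * card κ` distinct nonzero
columns are all the nonzero vectors, so `[P 0 P 1 P 2]` is a partition of the Hamming matrix. -/
structure IsHammingPartition {ρ κ : Type*} [Fintype κ] (P : Fin 3 → Matrix ρ κ (ZMod 2)) :
    Prop where
  col_ne_zero : ∀ i j, (P i)ᵀ j ≠ 0
  col_injective : Injective fun p : Fin 3 × κ => (P p.1)ᵀ p.2
  add_add_eq_zero : P 0 + P 1 + P 2 = 0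
  surjective_prod_mulVec : Surjective fun x => (P 0 *ᵥ x, P 1 *ᵥ x)

namespace HammingPartition

def tagU : Fin 2 → ZMod 2 := ![1, 0]
def tagV : Fin 2 → ZMod 2 := ![0, 1]
def tagW : Fin 2 → ZMod 2 := ![1, 1]

/-- Column `(j, s)` of block `i` of `lift P` is column `j` of `P (src i s)` with `tag i s`
appended. For each `s` the blocks `src · s` are distinct and the tags `tag · s` sum to zero,
and each column of `P` receives each of the tags `0, u, v, w` exactly once. -/
def src : Fin 3 → Fin 4 → Fin 3 := ![![0, 1, 1, 2], ![1, 0, 2, 1], ![2, 2, 0, 0]]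

def tag : Fin 3 → Fin 4 → Fin 2 → ZMod 2 :=
  ![![0, 0, tagV, 0], ![tagU, tagV, tagW, tagW], ![tagU, tagV, tagU, tagW]]

def extraTag : Fin 3 → Fin 2 → ZMod 2 := ![tagU, tagV, tagW]

theorem src_tag_injective {i i' : Fin 3} {s s' : Fin 4} (hsrc : src i s = src i' s')
    (htag : tag i s = tag i' s') : i = i' ∧ s = s' := by
  revert i i' s s'; decide

theorem extraTag_injective : Injective extraTag := by decide

theorem extraTag_ne_zero (i : Fin 3) : extraTag i ≠ 0 := by revert i; decide

theorem tag_add_add (s : Fin 4) : tag 0 s + tag 1 s + tag 2 s = 0 := by revert s; decide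

theorem extraTag_add_add : extraTag 0 + extraTag 1 + extraTag 2 = 0 := by decide

theorem add_add_src {M : Type*} [AddCommMonoid M] (x : Fin 3 → M) (s : Fin 4) :
    x (src 0 s) + x (src 1 s) + x (src 2 s) = x 0 + x 1 + x 2 := by
  fin_cases s <;> simp [src] <;> abel

set_option synthInstance.maxSize 1000 in
/-- The system satisfied by a vector `(r, α, r', β)` annihilating the columns `(j, s)` of
`[lift P 0; lift P 1]`, with `x i = r ⬝ᵥ (P i)ᵀ j`, `y i = r' ⬝ᵥ (P i)ᵀ j` and
`c s = α ⬝ᵥ tag 0 s + β ⬝ᵥ tag 1 s`; the solution does not depend on `j`. -/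
theorem dual_system_solution (x y : Fin 3 → ZMod 2) (c : Fin 4 → ZMod 2) (hx : x 2 = x 0 + x 1)
    (hy : y 2 = y 0 + y 1) (h : ∀ s, x (src 0 s) + y (src 1 s) + c s = 0) :
    x 0 = c 0 + c 1 + c 2 ∧ x 1 = c 0 + c 3 ∧ y 0 = c 0 + c 1 + c 3 ∧ y 1 = c 1 + c 2 := by
  revert x y c; decide

theorem eq_zero_of_dotProduct_tags (α β : Fin 2 → ZMod 2) (htag : ∀ s, α ⬝ᵥ tag 0 s + β ⬝ᵥ tag 1 s = 0)
    (hextra : α ⬝ᵥ extraTag 0 + β ⬝ᵥ extraTag 1 = 0) : α = 0 ∧ β = 0 := by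
  revert α β; decide

variable {ρ κ : Type*}

def lift (P : Fin 3 → Matrix ρ κ (ZMod 2)) (i : Fin 3) :
    Matrix (ρ ⊕ Fin 2) ((κ × Fin 4) ⊕ Unit) (ZMod 2) :=
  (of <| Sum.elim (fun c => Sum.elim ((P (src i c.2))ᵀ c.1) (tag i c.2))
    fun _ => Sum.elim 0 (extraTag i))ᵀ

variable (P : Fin 3 → Matrix ρ κ (ZMod 2)) (i : Fin 3)

theorem lift_col_inl (j : κ) (s : Fin 4) :
    (lift P i)ᵀ (.inl (j, s)) = Sum.elim ((P (src i s))ᵀ j) (tag i s) := rfl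

theorem lift_col_inr (u : Unit) :
    (lift P i)ᵀ (.inr u) = Sum.elim (0 : ρ → ZMod 2) (extraTag i) := rfl

end HammingPartition

namespace IsHammingPartition

open HammingPartition

variable {ρ κ : Type*} [Fintype κ] {P : Fin 3 → Matrix ρ κ (ZMod 2)}

theorem reindex {ρ' κ' : Type*} [Fintype κ'] (hP : IsHammingPartition P)
    (e : ρ ≃ ρ') (f : κ ≃ κ') : IsHammingPartition fun i => (P i).reindex e f where
  col_ne_zero i j h := hP.col_ne_zero i (f.symm j) <| by
    ext r
    simpa using congrFun h (e r)
  col_injective p q h := by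
    have hcol := @hP.col_injective (p.1, f.symm p.2) (q.1, f.symm q.2) <| by
      ext r
      simpa using congrFun h (e r)
    simp only [Prod.mk.injEq, EmbeddingLike.apply_eq_iff_eq] at hcol
    exact Prod.ext hcol.1 hcol.2
  add_add_eq_zero := by
    ext r c
    simpa using congrFun₂ hP.add_add_eq_zero (e.symm r) (f.symm c)
  surjective_prod_mulVec := by
    rintro ⟨a, b⟩
    obtain ⟨x, hx⟩ := hP.surjective_prod_mulVec (a ∘ e, b ∘ e)
    refine ⟨x ∘ f.symm, ?_⟩
    simp only [Prod.mk.injEq] at hx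
    simp [reindex_apply, submatrix_mulVec_equiv, comp_assoc, hx.1, hx.2]

theorem eq_add (hP : IsHammingPartition P) : P 2 = P 0 + P 1 := by
  ext r j
  have h := congrFun₂ hP.add_add_eq_zero r j
  simp only [Matrix.add_apply, Matrix.zero_apply] at h
  rw [Matrix.add_apply, eq_neg_of_add_eq_zero_right h, ZMod.neg_eq_self_mod_two]

theorem surjective_prod_mulVec_lift [Fintype ρ] [Nonempty κ] (hP : IsHammingPartition P) :
    Surjective fun x => (lift P 0 *ᵥ x, lift P 1 *ᵥ x) := by
  rw [prod_mulVec_surjective_iff]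
  intro g g' hg
  obtain ⟨r, α, rfl⟩ : ∃ r α, g = Sum.elim r α := ⟨_, _, (Sum.elim_comp_inl_inr g).symm⟩
  obtain ⟨r', β, rfl⟩ : ∃ r β, g' = Sum.elim r β := ⟨_, _, (Sum.elim_comp_inl_inr g').symm⟩
  have hcol (c) : Sum.elim r α ⬝ᵥ (lift P 0)ᵀ c + Sum.elim r' β ⬝ᵥ (lift P 1)ᵀ c = 0 :=
    congrFun hg c
  have hcol_inl (j s) : r ⬝ᵥ (P (src 0 s))ᵀ j + r' ⬝ᵥ (P (src 1 s))ᵀ j +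
      (α ⬝ᵥ tag 0 s + β ⬝ᵥ tag 1 s) = 0 := by
    have h := hcol (.inl (j, s))
    rw [lift_col_inl, lift_col_inl, sumElim_dotProduct_sumElim, sumElim_dotProduct_sumElim] at h
    rw [← h]
    ring
  have hdot_two (x : ρ → ZMod 2) (j) : x ⬝ᵥ (P 2)ᵀ j = x ⬝ᵥ (P 0)ᵀ j + x ⬝ᵥ (P 1)ᵀ j := by
    show (x ᵥ* P 2) j = (x ᵥ* P 0) j + (x ᵥ* P 1) j
    rw [hP.eq_add, vecMul_add, Pi.add_apply]
  have hsolve (j) := dual_system_solution (fun i => r ⬝ᵥ (P i)ᵀ j) (fun i => r' ⬝ᵥ (P i)ᵀ j) _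
    (hdot_two r j) (hdot_two r' j) (hcol_inl j)
  have hr : r = 0 := eq_zero_of_vecMul_eq_const hP.surjective_prod_mulVec
    (funext fun j => (hsolve j).1) (funext fun j => (hsolve j).2.1)
  have hr' : r' = 0 := eq_zero_of_vecMul_eq_const hP.surjective_prod_mulVec
    (funext fun j => (hsolve j).2.2.1) (funext fun j => (hsolve j).2.2.2)
  subst hr hr'
  have htag (s) : α ⬝ᵥ tag 0 s + β ⬝ᵥ tag 1 s = 0 := by
    simpa using hcol_inl (Classical.arbitrary κ) s
  have hextra : α ⬝ᵥ extraTag 0 + β ⬝ᵥ extraTag 1 = 0 := by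
    simpa [lift_col_inr, sumElim_dotProduct_sumElim] using hcol (.inr ())
  obtain ⟨rfl, rfl⟩ := eq_zero_of_dotProduct_tags α β htag hextra
  exact ⟨Sum.elim_zero_zero, Sum.elim_zero_zero⟩

protected theorem lift [Fintype ρ] [Nonempty κ] (hP : IsHammingPartition P) :
    IsHammingPartition (lift P) where
  col_ne_zero := by
    rintro i (⟨j, s⟩ | u) h
    · rw [lift_col_inl, Sum.elim_eq_zero_iff] at h
      exact hP.col_ne_zero _ _ h.1
    · rw [lift_col_inr, Sum.elim_eq_zero_iff] at h
      exact extraTag_ne_zero i h.2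
  col_injective := by
    rintro ⟨i, ⟨j, s⟩ | u⟩ ⟨i', ⟨j', s'⟩ | u'⟩ h <;>
      simp only [lift_col_inl, lift_col_inr, Sum.elim_eq_elim_iff] at h
    · obtain ⟨hsrc, rfl⟩ := Prod.mk.inj (hP.col_injective h.1)
      obtain ⟨rfl, rfl⟩ := src_tag_injective hsrc h.2
      rfl
    · exact absurd h.1 (hP.col_ne_zero _ _)
    · exact absurd h.1.symm (hP.col_ne_zero _ _)
    · rw [extraTag_injective h.2]
  add_add_eq_zero := by
    ext (r | t) (⟨j, s⟩ | u)
    · show P (src 0 s) r j + P (src 1 s) r j + P (src 2 s) r j = 0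
      rw [add_add_src fun i => P i r j]
      exact congrFun₂ hP.add_add_eq_zero r j
    · exact add_zero (0 + 0 : ZMod 2)
    · exact congrFun (tag_add_add s) t
    · exact congrFun extraTag_add_add t
  surjective_prod_mulVec := hP.surjective_prod_mulVec_lift

end IsHammingPartition

/-- (Inductive Hamming partition) If the `2k`-bit Hamming matrix admits a partition
`P = [A B C]` into three `2k × n` blocks (`3n + 1 = 2^(2k)`, columns distinct and
nonzero) with `A + B + C = 0` and the stacked matrix `[A; B]` full rank (its row space
is everything, i.e. the map `x ↦ (Ax, Bx)` is surjective), then the `2(k+1)`-bit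
Hamming matrix admits such a partition `[A₊ B₊ C₊]` into `2(k+1) × (4n+1)` blocks with
`A₊ + B₊ + C₊ = 0` and `[A₊; B₊]` full rank. -/
theorem stmt_18 (k n : ℕ) (hk : 1 ≤ k) (hn : 3 * n + 1 = 2 ^ (2 * k))
    (A B C : Matrix (Fin (2 * k)) (Fin n) (ZMod 2))
    (hcols_ne : ∀ (i : Fin 3) (j : Fin n), (fun r => (![A, B, C] i) r j) ≠ 0)
    (hcols_inj : Function.Injective
      (fun p : Fin 3 × Fin n => fun r => (![A, B, C] p.1) r p.2))
    (hsum : A + B + C = 0)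
    (hrank : Function.Surjective
      (fun x : Fin n → ZMod 2 => (A.mulVec x, B.mulVec x))) :
    ∃ Ap Bp Cp : Matrix (Fin (2 * (k + 1))) (Fin (4 * n + 1)) (ZMod 2),
      (∀ (i : Fin 3) (j : Fin (4 * n + 1)), (fun r => (![Ap, Bp, Cp] i) r j) ≠ 0) ∧
      Function.Injective
        (fun p : Fin 3 × Fin (4 * n + 1) => fun r => (![Ap, Bp, Cp] p.1) r p.2) ∧
      Ap + Bp + Cp = 0 ∧
      Function.Surjective
        (fun x : Fin (4 * n + 1) → ZMod 2 => (Ap.mulVec x, Bp.mulVec x)) := by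
  have hP : IsHammingPartition ![A, B, C] := ⟨hcols_ne, hcols_inj, hsum, hrank⟩
  have : Nonempty (Fin n) := ⟨⟨0, by
    have := Nat.one_lt_two_pow (n := 2 * k) (by omega)
    omega⟩⟩
  let e := Fintype.equivFinOfCardEq (α := Fin (2 * k) ⊕ Fin 2) (n := 2 * (k + 1)) <| by
    simp only [Fintype.card_sum, Fintype.card_fin]; ring
  let f := Fintype.equivFinOfCardEq (α := (Fin n × Fin 4) ⊕ Unit) (n := 4 * n + 1) <| by
    simp only [Fintype.card_sum, Fintype.card_prod, Fintype.card_fin, Fintype.card_unit]; ring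
  let Q := fun i => (HammingPartition.lift ![A, B, C] i).reindex e f
  obtain ⟨hne, hinj, hadd, hsurj⟩ := hP.lift.reindex e f
  have hQ : ![Q 0, Q 1, Q 2] = Q := by
    ext i : 1
    fin_cases i <;> rfl
  refine ⟨Q 0, Q 1, Q 2, ?_, ?_, hadd, hsurj⟩ <;> simp only [hQ]
  exacts [hne, hinj]
end
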